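/- arXiv:1902.05629 — 2 statements merged into one kernel-verified Lean document; each statement's English description precedes it below -/
import Mathlib

section
/- Let (H,{F_A},{F_G}) be a GR(1) game with singleton winning conditions, Z^∞ = ⟦φ₄⟧, and f¹ the memoryless strategy extracted from the rank. If q ∈ Z^∞ and L_q(H,F_G) ⊆ L_q(H,F_A), then Pre(L_q(H,f¹)) = Pre(L_q(H,f¹) ∩ L_q(H,F_A)); that is, f¹ is non-conflicting from q. -/
namespace GR1

/-- A two-player game graph `H = ⟨Q⁰, Q¹, δ⁰, δ¹, q₀⟩`.  `env` is the set `Q⁰` of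
environment states, `sys` the set `Q¹` of system states, and `delta` combines the
transition functions `δ⁰` and `δ¹`. -/
structure GameGraph (Q : Type*) where
  env : Set Q
  sys : Set Q
  delta : Q → Set Q
  disjoint_env_sys : Disjoint env sys
  union_env_sys : env ∪ sys = Set.univ
  delta_env : ∀ q ∈ env, delta q ⊆ sys
  delta_sys : ∀ q ∈ sys, delta q ⊆ env
  delta_nonempty : ∀ q, (delta q).Nonempty
  init : Q
  init_env : init ∈ env

namespace GameGraph

/-- The existential predecessor operator `Pre∃`. -/
def PreE {Q : Type*} (G : GameGraph Q) (P : Set Q) : Set Q :=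
  {q | (G.delta q ∩ P).Nonempty}

/-- The universal predecessor operator `Pre∀`. -/
def PreA {Q : Type*} (G : GameGraph Q) (P : Set Q) : Set Q :=
  {q | G.delta q ⊆ P}

/-- The player-0 (environment) controllable predecessor operator `Pre⁰`. -/
def Pre0 {Q : Type*} (G : GameGraph Q) (P : Set Q) : Set Q :=
  {q | q ∈ G.env ∧ (G.delta q ∩ P).Nonempty} ∪ {q | q ∈ G.sys ∧ G.delta q ⊆ P}

/-- The player-1 (system) controllable predecessor operator `Pre¹`. -/
def Pre1 {Q : Type*} (G : GameGraph Q) (P : Set Q) : Set Q :=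
  {q | q ∈ G.env ∧ G.delta q ⊆ P} ∪ {q | q ∈ G.sys ∧ (G.delta q ∩ P).Nonempty}

/-- The conditional predecessor `Precond(P,P') = Pre∃(P) ∩ Pre¹(P ∪ P')`. -/
def Precond {Q : Type*} (G : GameGraph Q) (P P' : Set Q) : Set Q :=
  G.PreE P ∩ G.Pre1 (P ∪ P')

/-- The dual conditional predecessor `Precondᶜ(P,P') = Pre∀(P) ∪ Pre⁰(P ∩ P')`. -/
def PrecondC {Q : Type*} (G : GameGraph Q) (P P' : Set Q) : Set Q :=
  G.PreA P ∪ G.Pre0 (P ∩ P')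

end GameGraph

/-- Knaster–Tarski least fixed point over the powerset lattice. -/
def lfpSet {Q : Type*} (F : Set Q → Set Q) : Set Q := ⋂₀ {S | F S ⊆ S}

/-- Knaster–Tarski greatest fixed point over the powerset lattice. -/
def gfpSet {Q : Type*} (F : Set Q → Set Q) : Set Q := ⋃₀ {S | S ⊆ F S}

/-- Knaster–Tarski least fixed point over the lattice of vectors of sets. -/
def lfpVec {Q : Type*} {n : ℕ} (F : (Fin n → Set Q) → (Fin n → Set Q)) : Fin n → Set Q :=
  fun a => ⋂ V ∈ {V : Fin n → Set Q | ∀ a', F V a' ⊆ V a'}, V a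

/-- Knaster–Tarski greatest fixed point over the lattice of vectors of sets. -/
def gfpVec {Q : Type*} {n : ℕ} (F : (Fin n → Set Q) → (Fin n → Set Q)) : Fin n → Set Q :=
  fun a => ⋃ V ∈ {V : Fin n → Set Q | ∀ a', V a' ⊆ F V a'}, V a

/-- Cyclic successor of a mode: `a⁺ = (a mod n) + 1` in 1-based counting. -/
def modeSucc {n : ℕ} (a : Fin n) : Fin n :=
  ⟨(a.val + 1) % n, Nat.mod_lt _ a.pos⟩

/-- `π` is an (infinite) play over `G` starting in the state `q`. -/
def IsPlayFrom {Q : Type*} (G : GameGraph Q) (q : Q) (π : ℕ → Q) : Prop :=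
  π 0 = q ∧ ∀ k, π (k + 1) ∈ G.delta (π k)

/-- `Inf(π) ∩ F ≠ ∅` : the play `π` visits the set `F` infinitely often. -/
def InfOft {Q : Type*} (π : ℕ → Q) (F : Set Q) : Prop := ∀ n, ∃ k, n ≤ k ∧ π k ∈ F

/-- `L_q(H,F)` : plays from `q` satisfying the Büchi condition `F`. -/
def LBuchi {Q : Type*} (G : GameGraph Q) (q : Q) (F : Set Q) : Set (ℕ → Q) :=
  {π | IsPlayFrom G q π ∧ InfOft π F}

/-- `L_q(H,𝓕)` : plays from `q` satisfying the generalized Büchi condition `𝓕`. -/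
def LGenBuchi {Q ι : Type*} (G : GameGraph Q) (q : Q) (F : ι → Set Q) : Set (ℕ → Q) :=
  {π | IsPlayFrom G q π ∧ ∀ i, InfOft π (F i)}

/-- `Pre(L)` : the set of all finite prefixes of the (infinite) words in `L`. -/
def prefixes {Q : Type*} (L : Set (ℕ → Q)) : Set (List Q) :=
  {w | ∃ π ∈ L, ∃ k, w = (List.range k).map π}

/-- A (history dependent) system strategy: on a history ending in a system state it
produces a `δ¹`-successor of that state. -/
def IsSysStrategy {Q : Type*} (G : GameGraph Q) (f : List Q → Q) : Prop :=
  ∀ (w : List Q) (q : Q), q ∈ G.sys → f (w ++ [q]) ∈ G.delta q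

/-- The finite history `π|_{[0,k]}` of a play. -/
def histUpTo {Q : Type*} (π : ℕ → Q) (k : ℕ) : List Q := (List.range (k + 1)).map π

/-- `L_q(H,f¹)` : plays from `q` compliant with the system strategy `f¹`. -/
def Lstrat {Q : Type*} (G : GameGraph Q) (q : Q) (f : List Q → Q) : Set (ℕ → Q) :=
  {π | IsPlayFrom G q π ∧ ∀ k, π k ∈ G.sys → π (k + 1) = f (histUpTo π k)}

/-- `L_q(H,f¹)` for a memoryless system strategy `f¹ : Q → Q`. -/
def Lmem {Q : Type*} (G : GameGraph Q) (q : Q) (f : Q → Q) : Set (ℕ → Q) :=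
  {π | IsPlayFrom G q π ∧ ∀ k, π k ∈ G.sys → π (k + 1) = f (π k)}

/-- Strict lexicographic order on ranks. -/
def rankLt (p r : ℕ × ℕ) : Prop := p.1 < r.1 ∨ (p.1 = r.1 ∧ p.2 < r.2)

/-- Lexicographic order on ranks. -/
def rankLe (p r : ℕ × ℕ) : Prop := p.1 < r.1 ∨ (p.1 = r.1 ∧ p.2 ≤ r.2)

/-! ### The 4-nested fixed point `φ₄` for singleton winning conditions -/

/-- The body `(F_G ∩ Pre¹(Z)) ∪ Pre¹(Y) ∪ ((Q∖F_A) ∩ Precond(W, X∖F_A))`. -/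
def body {Q : Type*} (G : GameGraph Q) (FA FG Z Y X W : Set Q) : Set Q :=
  (FG ∩ G.Pre1 Z) ∪ G.Pre1 Y ∪ (FAᶜ ∩ G.Precond W (X \ FA))

def innerW {Q : Type*} (G : GameGraph Q) (FA FG Z Y X : Set Q) : Set Q :=
  lfpSet (fun W => body G FA FG Z Y X W)

def innerX {Q : Type*} (G : GameGraph Q) (FA FG Z Y : Set Q) : Set Q :=
  gfpSet (fun X => innerW G FA FG Z Y X)

def innerY {Q : Type*} (G : GameGraph Q) (FA FG Z : Set Q) : Set Q :=
  lfpSet (fun Y => innerX G FA FG Z Y)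

/-- `⟦φ₄⟧ = Z^∞` : the value of `νZ.μY.νX.μW. (F_G ∩ Pre¹(Z)) ∪ Pre¹(Y) ∪
((Q∖F_A) ∩ Precond(W, X∖F_A))`. -/
def phi4 {Q : Type*} (G : GameGraph Q) (FA FG : Set Q) : Set Q :=
  gfpSet (fun Z => innerY G FA FG Z)

/-- The approximants `Yⁱ` of `Y` in the terminal iteration over `Z` (`Y⁰ = ∅`). -/
def Yapprox {Q : Type*} (G : GameGraph Q) (FA FG : Set Q) : ℕ → Set Q
  | 0 => ∅
  | i + 1 => innerX G FA FG (phi4 G FA FG) (Yapprox G FA FG i)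

/-- The approximants `Wⁱ_j` of `W` computed with `X = Xⁱ = Yⁱ` and `Y = Yⁱ⁻¹`. -/
def Wapprox {Q : Type*} (G : GameGraph Q) (FA FG : Set Q) (i : ℕ) : ℕ → Set Q
  | 0 => ∅
  | j + 1 =>
      body G FA FG (phi4 G FA FG) (Yapprox G FA FG (i - 1)) (Yapprox G FA FG i)
        (Wapprox G FA FG i j)

/-- `rank(q) = (i,j)` iff `q ∈ (Yⁱ∖Yⁱ⁻¹) ∩ (Wⁱ_j∖Wⁱ_{j−1})` with `i,j > 0`. -/
def hasRank {Q : Type*} (G : GameGraph Q) (FA FG : Set Q) (q : Q) (i j : ℕ) : Prop :=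
  0 < i ∧ 0 < j ∧
    q ∈ (Yapprox G FA FG i \ Yapprox G FA FG (i - 1)) ∩
        (Wapprox G FA FG i j \ Wapprox G FA FG i (j - 1))

/-- The memoryless system strategy extracted from the ranking: `f¹(q) ∈ δ¹(q)`,
`rank(f¹(q)) < rank(q)` whenever `rank(q) > (1,1)`, and `f¹(q) ∈ Z^∞` otherwise. -/
def GoodStrategy {Q : Type*} (G : GameGraph Q) (FA FG : Set Q) (f : Q → Q) : Prop :=
  ∀ q, q ∈ G.sys → q ∈ phi4 G FA FG →
    f q ∈ G.delta q ∧
      ∀ i j, hasRank G FA FG q i j →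
        (((i, j) = ((1 : ℕ), (1 : ℕ)) → f q ∈ phi4 G FA FG) ∧
          ((i, j) ≠ ((1 : ℕ), (1 : ℕ)) →
            ∃ i' j', hasRank G FA FG (f q) i' j' ∧ rankLt (i', j') (i, j)))

/-! ### The negated fixed point `φ̄₄` (singleton conditions) -/

/-- The simplified negated body
`Pre⁰(Z̄) ∪ ((Q∖F_G) ∩ F_A ∩ Pre⁰(Ȳ)) ∪ ((Q∖F_G) ∩ Precondᶜ(W̄, X̄ ∪ F_A))`. -/
def nbody {Q : Type*} (G : GameGraph Q) (FA FG Z Y X W : Set Q) : Set Q :=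
  G.Pre0 Z ∪ (FGᶜ ∩ FA ∩ G.Pre0 Y) ∪ (FGᶜ ∩ G.PrecondC W (X ∪ FA))

/-- The simplified negated fixed point `φ̄₄ = μZ̄.νȲ.μX̄.νW̄. nbody`. -/
def phi4neg {Q : Type*} (G : GameGraph Q) (FA FG : Set Q) : Set Q :=
  lfpSet (fun Z => gfpSet (fun Y => lfpSet (fun X => gfpSet (fun W =>
    nbody G FA FG Z Y X W))))

/-- The unsimplified negation body
`((Q∖F_G) ∪ Pre⁰(Z̄)) ∩ Pre⁰(Ȳ) ∩ (F_A ∪ Precondᶜ(W̄, X̄ ∪ F_A))`. -/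
def nbodyRaw {Q : Type*} (G : GameGraph Q) (FA FG Z Y X W : Set Q) : Set Q :=
  (FGᶜ ∪ G.Pre0 Z) ∩ G.Pre0 Y ∩ (FA ∪ G.PrecondC W (X ∪ FA))

/-- The unsimplified negated fixed point. -/
def phi4negRaw {Q : Type*} (G : GameGraph Q) (FA FG : Set Q) : Set Q :=
  lfpSet (fun Z => gfpSet (fun Y => lfpSet (fun X => gfpSet (fun W =>
    nbodyRaw G FA FG Z Y X W))))

/-- The approximants `Z̄ⁱ` of the negated fixed point (`Z̄⁰ = ∅`). -/
def Zbar {Q : Type*} (G : GameGraph Q) (FA FG : Set Q) : ℕ → Set Q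
  | 0 => ∅
  | i + 1 =>
      gfpSet (fun Y => lfpSet (fun X => gfpSet (fun W =>
        nbody G FA FG (Zbar G FA FG i) Y X W)))

/-- The approximants `X̄ⁱ_j` of `X̄` computed while computing `Z̄ⁱ` (using `Ȳ = Z̄ⁱ` and
`Z̄ = Z̄ⁱ⁻¹`), with `X̄ⁱ₀ = ∅`. -/
def Xbar {Q : Type*} (G : GameGraph Q) (FA FG : Set Q) (i : ℕ) : ℕ → Set Q
  | 0 => ∅
  | j + 1 =>
      gfpSet (fun W =>
        nbody G FA FG (Zbar G FA FG (i - 1)) (Zbar G FA FG i) (Xbar G FA FG i j) W)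

/-- The negated rank: `rank(q) = (i,j)` iff `q ∈ X̄ⁱ_j ∖ X̄ⁱ_{j−1}` with `i,j > 0`. -/
def nrank {Q : Type*} (G : GameGraph Q) (FA FG : Set Q) (q : Q) (i j : ℕ) : Prop :=
  0 < i ∧ 0 < j ∧ q ∈ Xbar G FA FG i j \ Xbar G FA FG i (j - 1)

/-- Environment moves permitted during the inductive construction of the reachable
region `R_{f¹}` (cases (a'), (b'), (c'2), (c'3) and the remaining case (c'1)). -/
def envStep {Q : Type*} (G : GameGraph Q) (FA FG : Set Q) (q' q'' : Q) : Prop :=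
  q'' ∈ G.delta q' ∧
    ∃ i j, nrank G FA FG q' i j ∧
      ((q'' ∈ (phi4 G FA FG)ᶜ ∧ ∃ i' j', nrank G FA FG q'' i' j' ∧ i' ≤ i - 1) ∨
       (q' ∈ FA \ FG ∧ q'' ∈ (phi4 G FA FG)ᶜ ∧
          ∃ i' j', nrank G FA FG q'' i' j' ∧ i' ≤ i) ∨
       (q'' ∈ (phi4 G FA FG)ᶜ ∧
          ∃ i' j', nrank G FA FG q'' i' j' ∧ rankLe (i', j') (i, j - 1)) ∨
       (q'' ∈ (phi4 G FA FG)ᶜ ∧ q'' ∈ FA ∧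
          ∃ i' j', nrank G FA FG q'' i' j' ∧ rankLe (i', j') (i, j)) ∨
       (∀ p ∈ G.delta q', p ∈ (phi4 G FA FG)ᶜ ∧
          ∃ i' j', nrank G FA FG p i' j' ∧ rankLe (i', j') (i, j)))

/-- `L_q(H,f¹,R_{f¹})` : plays from `q` compliant with `f¹` that remain within the
reachable region `R_{f¹}`, i.e. in which every environment move follows the rules of
the inductive construction of `R_{f¹}`. -/
def Lrestr {Q : Type*} (G : GameGraph Q) (FA FG : Set Q) (q : Q) (f : List Q → Q) :
    Set (ℕ → Q) :=
  {π | π ∈ Lstrat G q f ∧ ∀ k, π k ∈ G.env → envStep G FA FG (π k) (π (k + 1))}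

/-! ### The vectorized fixed point `φ₄ᵛ` for general GR(1) conditions -/

/-- The body `Ω^{ab}` of the vectorized fixed point. -/
def bodyV {Q : Type*} {n m : ℕ} (G : GameGraph Q) (FAv : Fin m → Set Q)
    (FGv : Fin n → Set Q) (Zv : Fin n → Set Q) (a : Fin n) (b : Fin m)
    (Y X W : Set Q) : Set Q :=
  (FGv a ∩ G.Pre1 (Zv (modeSucc a))) ∪ G.Pre1 Y ∪ ((FAv b)ᶜ ∩ G.Precond W (X \ FAv b))

def innerWV {Q : Type*} {n m : ℕ} (G : GameGraph Q) (FAv : Fin m → Set Q)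
    (FGv : Fin n → Set Q) (Zv : Fin n → Set Q) (a : Fin n) (b : Fin m)
    (Y X : Set Q) : Set Q :=
  lfpSet (fun W => bodyV G FAv FGv Zv a b Y X W)

def innerXV {Q : Type*} {n m : ℕ} (G : GameGraph Q) (FAv : Fin m → Set Q)
    (FGv : Fin n → Set Q) (Zv : Fin n → Set Q) (a : Fin n) (b : Fin m)
    (Y : Set Q) : Set Q :=
  gfpSet (fun X => innerWV G FAv FGv Zv a b Y X)

/-- The vector `[Z¹,…,Zⁿ]` of the vectorized fixed point `φ₄ᵛ`. -/
def phi4v {Q : Type*} {n m : ℕ} (G : GameGraph Q) (FAv : Fin m → Set Q)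
    (FGv : Fin n → Set Q) : Fin n → Set Q :=
  gfpVec (fun Zv a => lfpSet (fun Y => ⋃ b, innerXV G FAv FGv Zv a b Y))

/-- `⟦φ₄ᵛ⟧ = Z^∞ = ⋃_a Zᵃ^∞`. -/
def phi4vSem {Q : Type*} {n m : ℕ} (G : GameGraph Q) (FAv : Fin m → Set Q)
    (FGv : Fin n → Set Q) : Set Q :=
  ⋃ a, phi4v G FAv FGv a

/-- The approximants `ᵃYⁱ` (with `ᵃY⁰ = ∅`) of `Yᵃ` in the terminal iteration. -/
def YapproxV {Q : Type*} {n m : ℕ} (G : GameGraph Q) (FAv : Fin m → Set Q)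
    (FGv : Fin n → Set Q) (a : Fin n) : ℕ → Set Q
  | 0 => ∅
  | i + 1 => ⋃ b, innerXV G FAv FGv (phi4v G FAv FGv) a b (YapproxV G FAv FGv a i)

/-- The fixed point `ᵃᵇXⁱ` of `X^{ab}` computed during the `i`-th iteration. -/
def XfixV {Q : Type*} {n m : ℕ} (G : GameGraph Q) (FAv : Fin m → Set Q)
    (FGv : Fin n → Set Q) (a : Fin n) (b : Fin m) (i : ℕ) : Set Q :=
  innerXV G FAv FGv (phi4v G FAv FGv) a b (YapproxV G FAv FGv a (i - 1))

/-- The approximants `ᵃᵇWⁱ_j` of `W^{ab}` computed while computing `ᵃYⁱ`. -/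
def WapproxV {Q : Type*} {n m : ℕ} (G : GameGraph Q) (FAv : Fin m → Set Q)
    (FGv : Fin n → Set Q) (a : Fin n) (b : Fin m) (i : ℕ) : ℕ → Set Q
  | 0 => ∅
  | j + 1 =>
      bodyV G FAv FGv (phi4v G FAv FGv) a b (YapproxV G FAv FGv a (i - 1))
        (XfixV G FAv FGv a b i) (WapproxV G FAv FGv a b i j)

/-- The mode-based rank: `ᵃᵇrank(q) = (i,j)` iff
`q ∈ (ᵃYⁱ∖ᵃYⁱ⁻¹) ∩ (ᵃᵇWⁱ_j∖ᵃᵇWⁱ_{j−1})` with `i,j > 0`. -/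
def hasRankV {Q : Type*} {n m : ℕ} (G : GameGraph Q) (FAv : Fin m → Set Q)
    (FGv : Fin n → Set Q) (a : Fin n) (b : Fin m) (q : Q) (i j : ℕ) : Prop :=
  0 < i ∧ 0 < j ∧
    q ∈ (YapproxV G FAv FGv a i \ YapproxV G FAv FGv a (i - 1)) ∩
        (WapproxV G FAv FGv a b i j \ WapproxV G FAv FGv a b i (j - 1))

/-- The finite-memory system strategy extracted from the mode-based ranking. -/
def GoodStrategyV {Q : Type*} {n m : ℕ} (G : GameGraph Q) (FAv : Fin m → Set Q)
    (FGv : Fin n → Set Q) (f : Q × Fin n × Fin m → Q × Fin n × Fin m) : Prop :=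
  ∀ (q : Q) (a : Fin n) (b : Fin m), q ∈ G.sys → q ∈ phi4v G FAv FGv a →
    (f (q, a, b)).1 ∈ G.delta q ∧
      ∀ i j, hasRankV G FAv FGv a b q i j →
        (((i, j) = ((1 : ℕ), (1 : ℕ)) →
            (f (q, a, b)).1 ∈ phi4v G FAv FGv (modeSucc a) ∧
              (f (q, a, b)).2.1 = modeSucc a) ∧
          (1 < i ∧ j = 1 →
            (f (q, a, b)).2.1 = a ∧
              ∃ i' j',
                hasRankV G FAv FGv a ((f (q, a, b)).2.2) ((f (q, a, b)).1) i' j' ∧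
                  i' ≤ i - 1) ∧
          (1 < j →
            (f (q, a, b)).2.1 = a ∧ (f (q, a, b)).2.2 = b ∧
              ∃ i' j',
                hasRankV G FAv FGv a b ((f (q, a, b)).1) i' j' ∧
                  rankLe (i', j') (i, j - 1)))

/-- Compliance of a play with a finite-memory strategy via mode traces `α`, `β`. -/
def CompliantModeV {Q : Type*} {n m : ℕ} (G : GameGraph Q) (FAv : Fin m → Set Q)
    (FGv : Fin n → Set Q) (f : Q × Fin n × Fin m → Q × Fin n × Fin m)
    (π : ℕ → Q) (α : ℕ → Fin n) (β : ℕ → Fin m) : Prop :=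
  ∀ k,
    (π k ∈ G.sys → (π (k + 1), α (k + 1), β (k + 1)) = f (π k, α k, β k)) ∧
      (π k ∈ G.env →
        (hasRankV G FAv FGv (α k) (β k) (π (k + 1)) 1 1 →
            α (k + 1) = modeSucc (α k)) ∧
          ((∃ i, 1 < i ∧ hasRankV G FAv FGv (α k) (β k) (π (k + 1)) i 1) →
            α (k + 1) = α k) ∧
          ((∃ i j, 1 < j ∧ hasRankV G FAv FGv (α k) (β k) (π (k + 1)) i j) →
            α (k + 1) = α k ∧ β (k + 1) = β k))

/-- `L_q(H,f¹)` for a finite-memory strategy: plays from `q` compliant with `f¹`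
for some mode traces. -/
def LmodeV {Q : Type*} {n m : ℕ} (G : GameGraph Q) (FAv : Fin m → Set Q)
    (FGv : Fin n → Set Q) (q : Q) (f : Q × Fin n × Fin m → Q × Fin n × Fin m) :
    Set (ℕ → Q) :=
  {π | IsPlayFrom G q π ∧ ∃ α β, CompliantModeV G FAv FGv f π α β}

/-- `ᵃD = F_Gᵃ ∩ Pre¹(Z^{a⁺,∞})`. -/
def DsetV {Q : Type*} {n m : ℕ} (G : GameGraph Q) (FAv : Fin m → Set Q)
    (FGv : Fin n → Set Q) (a : Fin n) : Set Q :=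
  FGv a ∩ G.Pre1 (phi4v G FAv FGv (modeSucc a))

/-- `ᵃEⁱ = Pre¹(ᵃYⁱ⁻¹) ∖ ᵃYⁱ⁻¹`. -/
def EsetV {Q : Type*} {n m : ℕ} (G : GameGraph Q) (FAv : Fin m → Set Q)
    (FGv : Fin n → Set Q) (a : Fin n) (i : ℕ) : Set Q :=
  G.Pre1 (YapproxV G FAv FGv a (i - 1)) \ YapproxV G FAv FGv a (i - 1)

/-- `ᵃᵇΘⁱ_j = (Q∖F_Aᵇ) ∩ Precond(ᵃᵇWⁱ_{j−1}, ᵃᵇXⁱ∖F_Aᵇ)`. -/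
def ThetaV {Q : Type*} {n m : ℕ} (G : GameGraph Q) (FAv : Fin m → Set Q)
    (FGv : Fin n → Set Q) (a : Fin n) (b : Fin m) (i j : ℕ) : Set Q :=
  (FAv b)ᶜ ∩ G.Precond (WapproxV G FAv FGv a b i (j - 1)) (XfixV G FAv FGv a b i \ FAv b)

/-- `ᵃᵇRⁱ_j = ᵃᵇΘⁱ_j ∖ (ᵃᵇWⁱ_{j−1} ∪ ᵃYⁱ⁻¹ ∪ ᵃEⁱ ∪ ᵃD)`. -/
def RsetV {Q : Type*} {n m : ℕ} (G : GameGraph Q) (FAv : Fin m → Set Q)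
    (FGv : Fin n → Set Q) (a : Fin n) (b : Fin m) (i j : ℕ) : Set Q :=
  ThetaV G FAv FGv a b i j \
    (WapproxV G FAv FGv a b i (j - 1) ∪ YapproxV G FAv FGv a (i - 1) ∪
      EsetV G FAv FGv a i ∪ DsetV G FAv FGv a)

/-! ### The negated vectorized fixed point -/

/-- The body of the negated vectorized fixed point. -/
def nbodyV {Q : Type*} {n m : ℕ} (G : GameGraph Q) (FAv : Fin m → Set Q)
    (FGv : Fin n → Set Q) (Zv : Fin n → Set Q) (a : Fin n) (b : Fin m)
    (Y X W : Set Q) : Set Q :=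
  G.Pre0 (Zv (modeSucc a)) ∪ ((FGv a)ᶜ ∩ FAv b ∩ G.Pre0 Y) ∪
    ((FGv a)ᶜ ∩ G.PrecondC W (X ∪ FAv b))

/-- The coordinated approximants `Z̄ᵃⁱ` of the negated vectorized fixed point. -/
def ZbarV {Q : Type*} {n m : ℕ} (G : GameGraph Q) (FAv : Fin m → Set Q)
    (FGv : Fin n → Set Q) : ℕ → Fin n → Set Q
  | 0 => fun _ => ∅
  | i + 1 => fun a =>
      gfpSet (fun Y => ⋂ b, lfpSet (fun X => gfpSet (fun W =>
        nbodyV G FAv FGv (ZbarV G FAv FGv i) a b Y X W)))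

/-- The approximants `X̄^{ab,i}_j` of `X̄^{ab}` computed during the `i`-th iteration. -/
def XbarV {Q : Type*} {n m : ℕ} (G : GameGraph Q) (FAv : Fin m → Set Q)
    (FGv : Fin n → Set Q) (a : Fin n) (b : Fin m) (i : ℕ) : ℕ → Set Q
  | 0 => ∅
  | j + 1 =>
      gfpSet (fun W =>
        nbodyV G FAv FGv (ZbarV G FAv FGv (i - 1)) a b (ZbarV G FAv FGv i a)
          (XbarV G FAv FGv a b i j) W)

/-- The negated mode-based rank: `ᵃᵇrank(q) = (i,j)` iff `q ∈ X̄^{ab,i}_j∖X̄^{ab,i}_{j−1}`. -/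
def nrankV {Q : Type*} {n m : ℕ} (G : GameGraph Q) (FAv : Fin m → Set Q)
    (FGv : Fin n → Set Q) (a : Fin n) (b : Fin m) (q : Q) (i j : ℕ) : Prop :=
  0 < i ∧ 0 < j ∧ q ∈ XbarV G FAv FGv a b i j \ XbarV G FAv FGv a b i (j - 1)

/-- Environment moves permitted during the inductive construction of `R_{f¹}`
in the vectorized setting. -/
def envStepV {Q : Type*} {n m : ℕ} (G : GameGraph Q) (FAv : Fin m → Set Q)
    (FGv : Fin n → Set Q) (q' q'' : Q) : Prop :=
  q'' ∈ G.delta q' ∧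
    ∃ (a : Fin n) (b : Fin m) (i j : ℕ), nrankV G FAv FGv a b q' i j ∧
      ((q'' ∈ (phi4vSem G FAv FGv)ᶜ ∧
          ∃ b' i' j', nrankV G FAv FGv (modeSucc a) b' q'' i' j' ∧ i' ≤ i - 1) ∨
       (q' ∈ FAv b \ FGv a ∧ q'' ∈ (phi4vSem G FAv FGv)ᶜ ∧
          ∃ b' i' j', nrankV G FAv FGv a b' q'' i' j' ∧ i' ≤ i) ∨
       (q'' ∈ (phi4vSem G FAv FGv)ᶜ ∧
          ∃ i' j', nrankV G FAv FGv a b q'' i' j' ∧ rankLe (i', j') (i, j - 1)) ∨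
       (q'' ∈ (phi4vSem G FAv FGv)ᶜ ∧ q'' ∈ FAv b ∧
          ∃ i' j', nrankV G FAv FGv a b q'' i' j' ∧ rankLe (i', j') (i, j)) ∨
       (∀ p ∈ G.delta q', p ∈ (phi4vSem G FAv FGv)ᶜ ∧
          ∃ i' j', nrankV G FAv FGv a b p i' j' ∧ rankLe (i', j') (i, j)))

/-- `L_q(H,f¹,R_{f¹})` in the vectorized setting. -/
def LrestrV {Q : Type*} {n m : ℕ} (G : GameGraph Q) (FAv : Fin m → Set Q)
    (FGv : Fin n → Set Q) (q : Q) (f : List Q → Q) : Set (ℕ → Q) :=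
  {π | π ∈ Lstrat G q f ∧ ∀ k, π k ∈ G.env → envStepV G FAv FGv (π k) (π (k + 1))}

/-!
Every state of `Z^∞` has a rank, and ranks are well founded (lexicographic order).
The body of `φ₄` shows that from an environment state of `Z^∞` every move stays in `Z^∞`,
and that outside `F_G` some move lowers the rank; by construction `f¹` keeps the play in
`Z^∞` and, outside `F_G`, lowers the rank as well (rank `(1,1)` forces `F_G`). Hence a
finite prefix of an `f¹`-compliant play from `q` stays in `Z^∞` and can be continued by
rank-lowering compliant moves, which reach `F_G` again and again. The continued play is
`f¹`-compliant and in `L_q(H,F_G) ⊆ L_q(H,F_A)`, and it has the same prefix.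
-/

end GR1

section FixedPoints

variable {α : Type*} [CompleteLattice α]

theorem OrderHom.iterate_bot_le_lfp (f : α →o α) (n : ℕ) : f^[n] ⊥ ≤ f.lfp := by
  induction n with
  | zero => exact bot_le
  | succ n ih => rw [Function.iterate_succ_apply']; exact f.map_le_lfp ih

theorem OrderHom.exists_lfp_le_iterate_bot [WellFoundedGT α] (f : α →o α) :
    ∃ n, f.lfp ≤ f^[n] ⊥ := by
  obtain ⟨n, hn⟩ := WellFoundedGT.monotone_chain_condition
    ⟨fun n => f^[n] ⊥, f.monotone.monotone_iterate_of_le_map bot_le⟩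
  refine ⟨n, f.lfp_le (le_of_eq ?_)⟩
  rw [← Function.iterate_succ_apply' f n]
  exact (hn (n + 1) n.le_succ).symm

end FixedPoints

theorem Nat.exists_pos_le_and_not_pred {p : ℕ → Prop} {n : ℕ} (h0 : ¬p 0) (hn : p n) :
    ∃ m, 0 < m ∧ m ≤ n ∧ p m ∧ ¬p (m - 1) := by
  classical
  have hex : ∃ m, p m := ⟨n, hn⟩
  have hpos : 0 < Nat.find hex := Nat.pos_of_ne_zero fun h => h0 (h ▸ Nat.find_spec hex)
  exact ⟨Nat.find hex, hpos, Nat.find_min' hex hn, Nat.find_spec hex,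
    Nat.find_min hex (Nat.sub_lt hpos one_pos)⟩

namespace GR1

section Development

variable {Q : Type*}

section SetFixedPoints

variable {F F' : Set Q → Set Q}

theorem map_lfpSet (hF : Monotone F) : F (lfpSet F) = lfpSet F :=
  OrderHom.map_lfp ⟨F, hF⟩

theorem map_gfpSet (hF : Monotone F) : F (gfpSet F) = gfpSet F :=
  OrderHom.map_gfp ⟨F, hF⟩

theorem lfpSet_subset_lfpSet (hF' : Monotone F') (h : ∀ S, F S ⊆ F' S) :
    lfpSet F ⊆ lfpSet F' :=
  Set.sInter_subset_of_mem ((h _).trans (map_lfpSet hF').le)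

theorem gfpSet_subset_gfpSet (hF : Monotone F) (h : ∀ S, F S ⊆ F' S) :
    gfpSet F ⊆ gfpSet F' :=
  Set.subset_sUnion_of_mem ((map_gfpSet hF).ge.trans (h _))

theorem iterate_empty_subset_lfpSet (hF : Monotone F) (n : ℕ) : F^[n] ∅ ⊆ lfpSet F :=
  OrderHom.iterate_bot_le_lfp ⟨F, hF⟩ n

theorem exists_lfpSet_subset_iterate_empty [Finite Q] (hF : Monotone F) :
    ∃ n, lfpSet F ⊆ F^[n] ∅ :=
  OrderHom.exists_lfp_le_iterate_bot ⟨F, hF⟩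

end SetFixedPoints

namespace GameGraph

variable (G : GameGraph Q)

@[gcongr]
theorem PreE_mono {P P' : Set Q} (h : P ⊆ P') : G.PreE P ⊆ G.PreE P' :=
  fun _ ⟨u, hu, huP⟩ => ⟨u, hu, h huP⟩

@[gcongr]
theorem Pre1_mono {P P' : Set Q} (h : P ⊆ P') : G.Pre1 P ⊆ G.Pre1 P' := by
  rintro t (⟨hte, hδ⟩ | ⟨hts, u, hu, huP⟩)
  · exact Or.inl ⟨hte, hδ.trans h⟩
  · exact Or.inr ⟨hts, u, hu, h huP⟩

@[gcongr]
theorem Precond_mono {P₁ P₁' P₂ P₂' : Set Q} (h₁ : P₁ ⊆ P₁') (h₂ : P₂ ⊆ P₂') :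
    G.Precond P₁ P₂ ⊆ G.Precond P₁' P₂' := by
  unfold Precond
  gcongr

theorem PreE_empty : G.PreE ∅ = ∅ := by
  simp [PreE]

theorem Pre1_empty : G.Pre1 ∅ = ∅ := by
  ext t
  simp [Pre1, (G.delta_nonempty t).ne_empty]

theorem mem_env_or_mem_sys (t : Q) : t ∈ G.env ∨ t ∈ G.sys :=
  G.union_env_sys.ge (Set.mem_univ t)

theorem notMem_sys_of_mem_env {t : Q} (ht : t ∈ G.env) : t ∉ G.sys :=
  Set.disjoint_left.1 G.disjoint_env_sys ht

theorem delta_subset_of_mem_Pre1 {t : Q} {P : Set Q} (ht : t ∈ G.env) (h : t ∈ G.Pre1 P) :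
    G.delta t ⊆ P := by
  rcases h with ⟨-, hδ⟩ | ⟨hts, -⟩
  · exact hδ
  · exact absurd hts (G.notMem_sys_of_mem_env ht)

end GameGraph

section Monotonicity

variable (G : GameGraph Q) (FA FG : Set Q)

@[gcongr]
theorem body_mono {Z Z' Y Y' X X' W W' : Set Q} (hZ : Z ⊆ Z') (hY : Y ⊆ Y') (hX : X ⊆ X')
    (hW : W ⊆ W') : body G FA FG Z Y X W ⊆ body G FA FG Z' Y' X' W' := by
  unfold body
  gcongr

theorem body_monotone (Z Y X : Set Q) : Monotone (body G FA FG Z Y X) :=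
  fun _ _ hW => body_mono G FA FG subset_rfl subset_rfl subset_rfl hW

theorem innerW_mono {Z Z' Y Y' X X' : Set Q} (hZ : Z ⊆ Z') (hY : Y ⊆ Y') (hX : X ⊆ X') :
    innerW G FA FG Z Y X ⊆ innerW G FA FG Z' Y' X' :=
  lfpSet_subset_lfpSet (body_monotone G FA FG Z' Y' X')
    fun _ => body_mono G FA FG hZ hY hX subset_rfl

theorem innerX_mono {Z Z' Y Y' : Set Q} (hZ : Z ⊆ Z') (hY : Y ⊆ Y') :
    innerX G FA FG Z Y ⊆ innerX G FA FG Z' Y' :=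
  gfpSet_subset_gfpSet (fun _ _ hX => innerW_mono G FA FG subset_rfl subset_rfl hX)
    fun _ => innerW_mono G FA FG hZ hY subset_rfl

theorem innerX_monotone (Z : Set Q) : Monotone (innerX G FA FG Z) :=
  fun _ _ hY => innerX_mono G FA FG subset_rfl hY

theorem innerY_monotone : Monotone (innerY G FA FG) :=
  fun _ _ hZ => lfpSet_subset_lfpSet (innerX_monotone G FA FG _)
    fun _ => innerX_mono G FA FG hZ subset_rfl

end Monotonicity

section Approximants

variable (G : GameGraph Q) (FA FG : Set Q)

theorem phi4_eq_lfpSet : phi4 G FA FG = lfpSet (innerX G FA FG (phi4 G FA FG)) :=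
  (map_gfpSet (innerY_monotone G FA FG)).symm

theorem Yapprox_eq_iterate (i : ℕ) :
    Yapprox G FA FG i = (innerX G FA FG (phi4 G FA FG))^[i] ∅ := by
  induction i with
  | zero => rfl
  | succ i ih => rw [Function.iterate_succ_apply', ← ih]; rfl

theorem Yapprox_mono : Monotone (Yapprox G FA FG) := by
  rw [funext (Yapprox_eq_iterate G FA FG)]
  exact (innerX_monotone G FA FG _).monotone_iterate_of_le_map (Set.empty_subset _)

theorem Yapprox_subset_phi4 (i : ℕ) : Yapprox G FA FG i ⊆ phi4 G FA FG := by
  rw [Yapprox_eq_iterate]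
  exact (iterate_empty_subset_lfpSet (innerX_monotone G FA FG _) i).trans
    (phi4_eq_lfpSet G FA FG).ge

theorem exists_phi4_subset_Yapprox [Finite Q] : ∃ N, phi4 G FA FG ⊆ Yapprox G FA FG N := by
  obtain ⟨N, hN⟩ := exists_lfpSet_subset_iterate_empty (innerX_monotone G FA FG (phi4 G FA FG))
  exact ⟨N, (phi4_eq_lfpSet G FA FG).le.trans (hN.trans (Yapprox_eq_iterate G FA FG N).ge)⟩

/-- `Yⁱ⁺¹`, being the value of `νX.μW` with `Y = Yⁱ`, is itself the least fixed point in `W`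
with `X = Yⁱ⁺¹`. -/
theorem Yapprox_succ_eq_lfpSet (i : ℕ) :
    Yapprox G FA FG (i + 1) =
      lfpSet (body G FA FG (phi4 G FA FG) (Yapprox G FA FG i) (Yapprox G FA FG (i + 1))) :=
  (map_gfpSet fun _ _ hX => innerW_mono G FA FG subset_rfl subset_rfl hX).symm

theorem Wapprox_eq_iterate (i j : ℕ) :
    Wapprox G FA FG i j = (body G FA FG (phi4 G FA FG) (Yapprox G FA FG (i - 1))
      (Yapprox G FA FG i))^[j] ∅ := by
  induction j with
  | zero => rfl
  | succ j ih => rw [Function.iterate_succ_apply', ← ih]; rfl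

theorem Wapprox_mono (i : ℕ) : Monotone (Wapprox G FA FG i) := by
  rw [funext (Wapprox_eq_iterate G FA FG i)]
  exact (body_monotone G FA FG _ _ _).monotone_iterate_of_le_map (Set.empty_subset _)

theorem Wapprox_subset_Yapprox {i : ℕ} (hi : 0 < i) (j : ℕ) :
    Wapprox G FA FG i j ⊆ Yapprox G FA FG i := by
  obtain ⟨i, rfl⟩ := Nat.exists_eq_add_one_of_ne_zero hi.ne'
  rw [Wapprox_eq_iterate, Nat.add_sub_cancel]
  exact (iterate_empty_subset_lfpSet (body_monotone G FA FG _ _ _) j).trans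
    (Yapprox_succ_eq_lfpSet G FA FG i).ge

theorem exists_Yapprox_subset_Wapprox [Finite Q] {i : ℕ} (hi : 0 < i) :
    ∃ N, Yapprox G FA FG i ⊆ Wapprox G FA FG i N := by
  obtain ⟨i, rfl⟩ := Nat.exists_eq_add_one_of_ne_zero hi.ne'
  obtain ⟨N, hN⟩ := exists_lfpSet_subset_iterate_empty (body_monotone G FA FG (phi4 G FA FG)
    (Yapprox G FA FG i) (Yapprox G FA FG (i + 1)))
  refine ⟨N, (Yapprox_succ_eq_lfpSet G FA FG i).le.trans (hN.trans ?_)⟩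
  rw [Wapprox_eq_iterate, Nat.add_sub_cancel]

end Approximants

section Rank

variable {G : GameGraph Q} {FA FG : Set Q} {t : Q} {i j : ℕ}

theorem exists_hasRank_le_of_mem_Wapprox [Finite Q] (hi : 0 < i) (ht : t ∈ Wapprox G FA FG i j) :
    ∃ i' j', hasRank G FA FG t i' j' ∧ rankLe (i', j') (i, j) := by
  obtain ⟨i', hi'0, hi'i, hti', hti'_pred⟩ := Nat.exists_pos_le_and_not_pred
    (p := (t ∈ Yapprox G FA FG ·)) (Set.notMem_empty t) (Wapprox_subset_Yapprox G FA FG hi j ht)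
  obtain ⟨N, hN⟩ := exists_Yapprox_subset_Wapprox G FA FG hi'0
  have htW : t ∈ Wapprox G FA FG i' (if i' = i then j else N) := by
    split_ifs with h
    · exact h ▸ ht
    · exact hN hti'
  obtain ⟨j', hj'0, hj'le, htj', htj'_pred⟩ := Nat.exists_pos_le_and_not_pred
    (p := (t ∈ Wapprox G FA FG i' ·)) (Set.notMem_empty t) htW
  refine ⟨i', j', ⟨hi'0, hj'0, ⟨hti', hti'_pred⟩, htj', htj'_pred⟩, ?_⟩
  rcases hi'i.lt_or_eq with h | rfl
  · exact Or.inl h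
  · exact Or.inr ⟨rfl, by simpa using hj'le⟩

theorem exists_hasRank_of_mem_Yapprox [Finite Q] (ht : t ∈ Yapprox G FA FG i) :
    ∃ i' j', hasRank G FA FG t i' j' ∧ i' ≤ i := by
  rcases Nat.eq_zero_or_pos i with rfl | hi
  · exact absurd ht (Set.notMem_empty t)
  obtain ⟨N, hN⟩ := exists_Yapprox_subset_Wapprox G FA FG hi
  obtain ⟨i', j', hr, hle⟩ := exists_hasRank_le_of_mem_Wapprox hi (hN ht)
  refine ⟨i', j', hr, ?_⟩
  rcases hle with h | ⟨h, -⟩ <;> exact h.le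

theorem exists_hasRank [Finite Q] (ht : t ∈ phi4 G FA FG) : ∃ i j, hasRank G FA FG t i j := by
  obtain ⟨N, hN⟩ := exists_phi4_subset_Yapprox G FA FG
  obtain ⟨i, j, hr, -⟩ := exists_hasRank_of_mem_Yapprox (hN ht)
  exact ⟨i, j, hr⟩

namespace hasRank

theorem mem_phi4 (h : hasRank G FA FG t i j) : t ∈ phi4 G FA FG :=
  Yapprox_subset_phi4 G FA FG i h.2.2.1.1

theorem unique {i' j' : ℕ} (h : hasRank G FA FG t i j) (h' : hasRank G FA FG t i' j') :
    i = i' ∧ j = j' := by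
  obtain ⟨hi, hj, ⟨hY, hnY⟩, hW, hnW⟩ := h
  obtain ⟨hi', hj', ⟨hY', hnY'⟩, hW', hnW'⟩ := h'
  have hii' : i = i' := by
    by_contra hne
    rcases Nat.lt_or_gt_of_ne hne with h | h
    · exact hnY' (Yapprox_mono G FA FG (Nat.le_sub_one_of_lt h) hY)
    · exact hnY (Yapprox_mono G FA FG (Nat.le_sub_one_of_lt h) hY')
  subst hii'
  refine ⟨rfl, ?_⟩
  by_contra hne
  rcases Nat.lt_or_gt_of_ne hne with h | h
  · exact hnW' (Wapprox_mono G FA FG i (Nat.le_sub_one_of_lt h) hW)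
  · exact hnW (Wapprox_mono G FA FG i (Nat.le_sub_one_of_lt h) hW')

theorem mem_body (h : hasRank G FA FG t i j) :
    t ∈ body G FA FG (phi4 G FA FG) (Yapprox G FA FG (i - 1)) (Yapprox G FA FG i)
      (Wapprox G FA FG i (j - 1)) := by
  obtain ⟨j, rfl⟩ := Nat.exists_eq_add_one_of_ne_zero h.2.1.ne'
  exact h.2.2.2.1

theorem mem_FG_of_one_one (h : hasRank G FA FG t 1 1) : t ∈ FG := by
  have hb := h.mem_body
  simp only [body, Nat.sub_self, Yapprox, Wapprox, G.Pre1_empty, G.PreE_empty,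
    GameGraph.Precond, Set.empty_inter, Set.inter_empty, Set.union_empty] at hb
  exact hb.1

end hasRank

def HasLowerRank (G : GameGraph Q) (FA FG : Set Q) (u t : Q) : Prop :=
  ∃ i j i' j', hasRank G FA FG t i j ∧ hasRank G FA FG u i' j' ∧ rankLt (i', j') (i, j)

theorem wellFounded_rankLt : WellFounded rankLt := by
  have : rankLt = Prod.Lex (· < ·) (· < ·) := by
    ext p r
    exact Prod.lex_def.symm
  rw [this]
  exact wellFounded_lt.prod_lex wellFounded_lt

theorem wellFounded_hasLowerRank : WellFounded (HasLowerRank G FA FG) := by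
  classical
  let r : Q → ℕ × ℕ := fun t =>
    if h : ∃ p : ℕ × ℕ, hasRank G FA FG t p.1 p.2 then h.choose else (0, 0)
  have hr : ∀ {t i j}, hasRank G FA FG t i j → r t = (i, j) := by
    intro t i j h
    have hex : ∃ p : ℕ × ℕ, hasRank G FA FG t p.1 p.2 := ⟨(i, j), h⟩
    obtain ⟨h1, h2⟩ := h.unique hex.choose_spec
    simp only [r, dif_pos hex, h1, h2]
  refine Subrelation.wf ?_ (InvImage.wf r wellFounded_rankLt)
  rintro u t ⟨i, j, i', j', ht, hu, hlt⟩
  change rankLt (r u) (r t)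
  rw [hr ht, hr hu]
  exact hlt

end Rank

section Moves

variable {G : GameGraph Q} {FA FG : Set Q} {t : Q} {i j : ℕ}

theorem body_cases_of_mem_env {Z Y X W : Set Q} (hte : t ∈ G.env)
    (h : t ∈ body G FA FG Z Y X W) :
    (t ∈ FG ∧ G.delta t ⊆ Z) ∨ G.delta t ⊆ Y ∨
      ((G.delta t ∩ W).Nonempty ∧ G.delta t ⊆ W ∪ X) := by
  rcases h with (⟨hFG, hZ⟩ | hY) | ⟨-, hW, hWX⟩
  · exact Or.inl ⟨hFG, G.delta_subset_of_mem_Pre1 hte hZ⟩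
  · exact Or.inr (Or.inl (G.delta_subset_of_mem_Pre1 hte hY))
  · refine Or.inr (Or.inr ⟨hW, (G.delta_subset_of_mem_Pre1 hte hWX).trans ?_⟩)
    gcongr
    exact Set.sdiff_subset

theorem delta_subset_phi4_of_mem_env [Finite Q] (ht : t ∈ phi4 G FA FG) (hte : t ∈ G.env) :
    G.delta t ⊆ phi4 G FA FG := by
  obtain ⟨i, j, hr⟩ := exists_hasRank ht
  rcases body_cases_of_mem_env hte hr.mem_body with ⟨-, h⟩ | h | ⟨-, h⟩
  · exact h
  · exact h.trans (Yapprox_subset_phi4 G FA FG _)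
  · refine h.trans (Set.union_subset ?_ (Yapprox_subset_phi4 G FA FG i))
    exact (Wapprox_subset_Yapprox G FA FG hr.1 _).trans (Yapprox_subset_phi4 G FA FG i)

theorem exists_delta_rankLt_of_mem_env [Finite Q] (hte : t ∈ G.env) (hFG : t ∉ FG)
    (hr : hasRank G FA FG t i j) :
    ∃ u ∈ G.delta t, ∃ i' j', hasRank G FA FG u i' j' ∧ rankLt (i', j') (i, j) := by
  rcases body_cases_of_mem_env hte hr.mem_body with ⟨h, -⟩ | h | ⟨⟨u, hu, huW⟩, -⟩
  · exact absurd h hFG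
  · obtain ⟨u, hu⟩ := G.delta_nonempty t
    obtain ⟨i', j', hr', hi'⟩ := exists_hasRank_of_mem_Yapprox (h hu)
    exact ⟨u, hu, i', j', hr', Or.inl (by have := hr.1; omega)⟩
  · obtain ⟨i', j', hr', hle⟩ := exists_hasRank_le_of_mem_Wapprox hr.1 huW
    refine ⟨u, hu, i', j', hr', ?_⟩
    have := hr.2.1
    simp only [rankLe, rankLt] at hle ⊢
    omega

namespace GoodStrategy

variable {f : Q → Q}

theorem mem_phi4 [Finite Q] (hf : GoodStrategy G FA FG f) (hts : t ∈ G.sys)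
    (ht : t ∈ phi4 G FA FG) : f t ∈ phi4 G FA FG := by
  obtain ⟨i, j, hr⟩ := exists_hasRank ht
  by_cases h11 : (i, j) = (1, 1)
  · exact ((hf t hts ht).2 i j hr).1 h11
  · obtain ⟨i', j', hr', -⟩ := ((hf t hts ht).2 i j hr).2 h11
    exact hr'.mem_phi4

theorem exists_hasRank_rankLt (hf : GoodStrategy G FA FG f) (hts : t ∈ G.sys) (hFG : t ∉ FG)
    (hr : hasRank G FA FG t i j) :
    ∃ i' j', hasRank G FA FG (f t) i' j' ∧ rankLt (i', j') (i, j) := by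
  refine ((hf t hts hr.mem_phi4).2 i j hr).2 fun h11 => hFG ?_
  obtain ⟨rfl, rfl⟩ := Prod.mk.inj h11
  exact hr.mem_FG_of_one_one

end GoodStrategy

end Moves

section Plays

def CompliantStep (G : GameGraph Q) (f : Q → Q) (s t : Q) : Prop :=
  t ∈ G.delta s ∧ (s ∈ G.sys → t = f s)

theorem compliantStep_of_mem_env {G : GameGraph Q} {f : Q → Q} {s t : Q} (hs : s ∈ G.env)
    (ht : t ∈ G.delta s) : CompliantStep G f s t :=
  ⟨ht, fun hss => absurd hss (G.notMem_sys_of_mem_env hs)⟩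

theorem mem_Lmem_iff {G : GameGraph Q} {q : Q} {f : Q → Q} {π : ℕ → Q} :
    π ∈ Lmem G q f ↔ π 0 = q ∧ ∀ n, CompliantStep G f (π n) (π (n + 1)) := by
  simp only [CompliantStep, forall_and]
  exact and_assoc

theorem prefixes_mono {L L' : Set (ℕ → Q)} (h : L ⊆ L') : prefixes L ⊆ prefixes L' :=
  fun _ ⟨π, hπ, k, hw⟩ => ⟨π, h hπ, k, hw⟩

theorem exists_seq_infOft_of_wellFounded {S F : Set Q} {step R : Q → Q → Prop}
    (hR : WellFounded R) (hprog : ∀ s ∈ S, ∃ t ∈ S, step s t ∧ (s ∉ F → R t s))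
    {s : Q} (hs : s ∈ S) :
    ∃ ρ : ℕ → Q, ρ 0 = s ∧ (∀ n, step (ρ n) (ρ (n + 1))) ∧ InfOft ρ F := by
  choose! g hgS hstep hdec using hprog
  have hmem : ∀ n, g^[n] s ∈ S := by
    intro n
    induction n with
    | zero => exact hs
    | succ n ih => rw [Function.iterate_succ_apply']; exact hgS _ ih
  refine ⟨fun n => g^[n] s, rfl, fun n => ?_, fun n => ?_⟩
  · simp only [Function.iterate_succ_apply']
    exact hstep _ (hmem n)
  suffices ∀ x m, g^[m] s = x → ∃ k, m ≤ k ∧ g^[k] s ∈ F from this _ n rfl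
  intro x
  induction x using hR.induction with
  | _ x ih =>
  intro m hm
  by_cases hx : x ∈ F
  · exact ⟨m, le_rfl, hm ▸ hx⟩
  · have hsucc : g^[m + 1] s = g x := by rw [Function.iterate_succ_apply', hm]
    obtain ⟨k, hk, hkF⟩ := ih (g x) (hdec x (hm ▸ hmem m) hx) (m + 1) hsucc
    exact ⟨k, by omega, hkF⟩

def splice (π : ℕ → Q) (k : ℕ) (ρ : ℕ → Q) (n : ℕ) : Q :=
  if n ≤ k then π n else ρ (n - k)

variable {π ρ : ℕ → Q} {k : ℕ}

theorem splice_of_le {n : ℕ} (hn : n ≤ k) : splice π k ρ n = π n :=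
  if_pos hn

theorem splice_add (h0 : ρ 0 = π k) (n : ℕ) : splice π k ρ (k + n) = ρ n := by
  rcases Nat.eq_zero_or_pos n with rfl | hn
  · exact (splice_of_le le_rfl).trans h0.symm
  · rw [splice, if_neg (by omega), Nat.add_sub_cancel_left]

theorem splice_step {step : Q → Q → Prop} (hπ : ∀ n < k, step (π n) (π (n + 1)))
    (hρ : ∀ n, step (ρ n) (ρ (n + 1))) (h0 : ρ 0 = π k) (n : ℕ) :
    step (splice π k ρ n) (splice π k ρ (n + 1)) := by
  rcases Nat.lt_or_ge n k with hn | hn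
  · rw [splice_of_le hn.le, splice_of_le hn]
    exact hπ n hn
  · obtain ⟨m, rfl⟩ := Nat.exists_eq_add_of_le hn
    rw [splice_add h0, add_assoc, splice_add h0]
    exact hρ m

theorem InfOft.splice {F : Set Q} (h0 : ρ 0 = π k) (hρ : InfOft ρ F) :
    InfOft (splice π k ρ) F := by
  intro n
  obtain ⟨m, hm, hmF⟩ := hρ n
  exact ⟨k + m, by omega, (splice_add h0 m).symm ▸ hmF⟩

theorem prefixes_splice :
    (List.range k).map (splice π k ρ) = (List.range k).map π :=
  List.map_congr_left fun _ hn => splice_of_le (List.mem_range.1 hn).le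

end Plays

section Compliance

variable {G : GameGraph Q} {FA FG : Set Q} {f : Q → Q} {s t : Q}

namespace GoodStrategy

theorem mem_phi4_of_compliantStep [Finite Q] (hf : GoodStrategy G FA FG f) (hs : s ∈ phi4 G FA FG)
    (hst : CompliantStep G f s t) : t ∈ phi4 G FA FG := by
  rcases G.mem_env_or_mem_sys s with hse | hss
  · exact delta_subset_phi4_of_mem_env hs hse hst.1
  · rw [hst.2 hss]
    exact hf.mem_phi4 hss hs

theorem seq_mem_phi4 [Finite Q] (hf : GoodStrategy G FA FG f) {π : ℕ → Q}
    (h0 : π 0 ∈ phi4 G FA FG) (hπ : ∀ n, CompliantStep G f (π n) (π (n + 1))) (n : ℕ) :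
    π n ∈ phi4 G FA FG := by
  induction n with
  | zero => exact h0
  | succ n ih => exact hf.mem_phi4_of_compliantStep ih (hπ n)

theorem exists_compliantStep [Finite Q] (hf : GoodStrategy G FA FG f) (hs : s ∈ phi4 G FA FG) :
    ∃ t ∈ phi4 G FA FG, CompliantStep G f s t ∧ (s ∉ FG → HasLowerRank G FA FG t s) := by
  obtain ⟨i, j, hr⟩ := exists_hasRank hs
  rcases G.mem_env_or_mem_sys s with hse | hss
  · by_cases hFG : s ∈ FG
    · obtain ⟨t, ht⟩ := G.delta_nonempty s
      exact ⟨t, delta_subset_phi4_of_mem_env hs hse ht, compliantStep_of_mem_env hse ht,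
        absurd hFG⟩
    · obtain ⟨t, ht, i', j', hr', hlt⟩ := exists_delta_rankLt_of_mem_env hse hFG hr
      exact ⟨t, hr'.mem_phi4, compliantStep_of_mem_env hse ht,
        fun _ => ⟨i, j, i', j', hr, hr', hlt⟩⟩
  · refine ⟨f s, hf.mem_phi4 hss hs, ⟨(hf s hss hs).1, fun _ => rfl⟩, fun hFG => ?_⟩
    obtain ⟨i', j', hr', hlt⟩ := hf.exists_hasRank_rankLt hss hFG hr
    exact ⟨i, j, i', j', hr, hr', hlt⟩

end GoodStrategy

end Compliance

end Development

/-- Lemma 5 of the paper: if `q ∈ Z^∞` and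
`L_q(H,F_G) ⊆ L_q(H,F_A)` then `Pre(L_q(H,f¹)) = Pre(L_q(H,f¹) ∩ L_q(H,F_A))`,
i.e. the extracted strategy `f¹` is non-conflicting from `q`. -/
theorem strategy_nonconflicting {Q : Type*} [Fintype Q] (G : GameGraph Q)
    (FA FG : Set Q) (f : Q → Q) (hf : GoodStrategy G FA FG f)
    (q : Q) (hq : q ∈ phi4 G FA FG) (hsub : LBuchi G q FG ⊆ LBuchi G q FA) :
    prefixes (Lmem G q f) = prefixes (Lmem G q f ∩ LBuchi G q FA) := by
  refine Set.Subset.antisymm ?_ (prefixes_mono Set.inter_subset_left)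
  rintro _ ⟨π, hπ, k, rfl⟩
  obtain ⟨hπ0, hπstep⟩ := mem_Lmem_iff.1 hπ
  have hπk : π k ∈ phi4 G FA FG := hf.seq_mem_phi4 (hπ0 ▸ hq) hπstep k
  obtain ⟨ρ, hρ0, hρstep, hρFG⟩ := exists_seq_infOft_of_wellFounded wellFounded_hasLowerRank
    (fun s hs => hf.exists_compliantStep hs) hπk
  have hπ' : splice π k ρ ∈ Lmem G q f :=
    mem_Lmem_iff.2 ⟨(splice_of_le k.zero_le).trans hπ0,
      splice_step (fun n _ => hπstep n) hρstep hρ0⟩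
  exact ⟨splice π k ρ, ⟨hπ', hsub ⟨hπ'.1, hρFG.splice hρ0⟩⟩, k, prefixes_splice.symm⟩

end GR1
end

section
/- Let (H,{F_A},{F_G}) be a GR(1) game with singleton winning conditions, let q ∈ Q∖⟦φ₄⟧, and let f¹ be a system strategy over H such that ∅ ≠ L_q(H,f¹) ⊆ L̄_q(H,F_A) ∪ L_q(H,F_G). Then Pre(L_q(H,f¹)) ≠ Pre(L_q(H,f¹) ∩ L_q(H,F_A)); that is, f¹ is conflicting from q. -/
namespace GR1

/-! ### Auxiliary lemmas for Statement 12 -/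

section Lattice

variable {Q : Type*}

lemma lfpSet_le {F : Set Q → Set Q} {S : Set Q} (h : F S ⊆ S) : lfpSet F ⊆ S :=
  Set.sInter_subset_of_mem h

lemma le_gfpSet {F : Set Q → Set Q} {S : Set Q} (h : S ⊆ F S) : S ⊆ gfpSet F :=
  Set.subset_sUnion_of_mem h

lemma lfpSet_mono {F F' : Set Q → Set Q} (h : ∀ S, F S ⊆ F' S) :
    lfpSet F ⊆ lfpSet F' :=
  Set.sInter_subset_sInter (fun S hS => (h S).trans hS)

lemma gfpSet_mono {F F' : Set Q → Set Q} (h : ∀ S, F S ⊆ F' S) :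
    gfpSet F ⊆ gfpSet F' :=
  Set.sUnion_subset_sUnion (fun S hS => hS.trans (h S))

lemma map_lfpSet_le {F : Set Q → Set Q} (hF : Monotone F) :
    F (lfpSet F) ⊆ lfpSet F := by
  apply Set.subset_sInter
  intro S hS
  exact (hF (lfpSet_le hS)).trans hS

lemma lfpSet_fixed {F : Set Q → Set Q} (hF : Monotone F) :
    F (lfpSet F) = lfpSet F :=
  subset_antisymm (map_lfpSet_le hF) (lfpSet_le (hF (map_lfpSet_le hF)))

lemma le_map_gfpSet {F : Set Q → Set Q} (hF : Monotone F) :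
    gfpSet F ⊆ F (gfpSet F) := by
  apply Set.sUnion_subset
  intro S hS
  exact hS.trans (hF (le_gfpSet hS))

lemma gfpSet_fixed {F : Set Q → Set Q} (hF : Monotone F) :
    F (gfpSet F) = gfpSet F :=
  subset_antisymm (le_gfpSet (hF (le_map_gfpSet hF))) (le_map_gfpSet hF)

end Lattice

section Mono

variable {Q : Type*} (G : GameGraph Q)

lemma Pre1_mono {P P' : Set Q} (h : P ⊆ P') : G.Pre1 P ⊆ G.Pre1 P' := by
  rintro x (⟨hx, hd⟩ | ⟨hx, hd⟩)
  · exact Or.inl ⟨hx, hd.trans h⟩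
  · exact Or.inr ⟨hx, hd.mono (Set.inter_subset_inter_right _ h)⟩

lemma PreE_mono {P P' : Set Q} (h : P ⊆ P') : G.PreE P ⊆ G.PreE P' := by
  intro x hx
  exact hx.mono (Set.inter_subset_inter_right _ h)

lemma Precond_mono {P1 P2 P1' P2' : Set Q} (h1 : P1 ⊆ P1') (h2 : P2 ⊆ P2') :
    G.Precond P1 P2 ⊆ G.Precond P1' P2' :=
  Set.inter_subset_inter (PreE_mono G h1) (Pre1_mono G (Set.union_subset_union h1 h2))

lemma body_mono_W {FA FG Z Y X W W' : Set Q} (h : W ⊆ W') :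
    body G FA FG Z Y X W ⊆ body G FA FG Z Y X W' :=
  Set.union_subset_union (subset_refl _)
    (Set.inter_subset_inter_right _ (Precond_mono G h (subset_refl _)))

lemma body_mono_X {FA FG Z Y X X' W : Set Q} (h : X ⊆ X') :
    body G FA FG Z Y X W ⊆ body G FA FG Z Y X' W :=
  Set.union_subset_union (subset_refl _)
    (Set.inter_subset_inter_right _
      (Precond_mono G (subset_refl _) (Set.diff_subset_diff_left h)))

lemma body_mono_Y {FA FG Z Y Y' X W : Set Q} (h : Y ⊆ Y') :
    body G FA FG Z Y X W ⊆ body G FA FG Z Y' X W :=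
  Set.union_subset_union (Set.union_subset_union (subset_refl _) (Pre1_mono G h))
    (subset_refl _)

lemma innerW_mono_X {FA FG Z Y X X' : Set Q} (h : X ⊆ X') :
    innerW G FA FG Z Y X ⊆ innerW G FA FG Z Y X' :=
  lfpSet_mono (fun _ => body_mono_X G h)

lemma innerW_mono_Y {FA FG Z Y Y' X : Set Q} (h : Y ⊆ Y') :
    innerW G FA FG Z Y X ⊆ innerW G FA FG Z Y' X :=
  lfpSet_mono (fun _ => body_mono_Y G h)

lemma innerX_mono_Y {FA FG Z Y Y' : Set Q} (h : Y ⊆ Y') :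
    innerX G FA FG Z Y ⊆ innerX G FA FG Z Y' :=
  gfpSet_mono (fun _ => innerW_mono_Y G h)

end Mono
section Hist

variable {Q : Type*}

lemma histUpTo_succ (π : ℕ → Q) (m : ℕ) :
    histUpTo π (m + 1) = histUpTo π m ++ [π (m + 1)] := by
  unfold histUpTo
  rw [List.range_succ, List.map_append, List.map_singleton]

lemma histUpTo_congr {π σ : ℕ → Q} {m : ℕ} (h : ∀ i ≤ m, π i = σ i) :
    histUpTo π m = histUpTo σ m := by
  unfold histUpTo
  apply List.map_congr_left
  intro i hi
  exact h i (Nat.lt_succ_iff.mp (List.mem_range.mp hi))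

lemma map_range_injective {π σ : ℕ → Q} {n : ℕ}
    (h : (List.range n).map π = (List.range n).map σ) :
    ∀ i < n, π i = σ i := by
  intro i hi
  have h1 : ((List.range n).map π)[i]'(by simpa using hi) =
      ((List.range n).map σ)[i]'(by simpa using hi) := by
    simp only [h]
  simpa using h1

end Hist
section Extend

variable {Q : Type*}

open Classical

/-- One step of the canonical extension of a finite history to an infinite play:
the state component records the full history so far, the `Q` component the current
state. -/
noncomputable def extStep (G : GameGraph Q) (f : List Q → Q) (x : List Q × Q) :
    List Q × Q :=
  (x.1 ++ [x.2],
    if x.2 ∈ G.sys then f (x.1 ++ [x.2]) else (G.delta_nonempty x.2).some)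

noncomputable def extChain (G : GameGraph Q) (f : List Q → Q) (s : List Q × Q)
    (n : ℕ) : List Q × Q :=
  (extStep G f)^[n] s

/-- The canonical extension of the history `histUpTo π k ++ [c]` to an infinite play. -/
noncomputable def extPlay (G : GameGraph Q) (f : List Q → Q) (π : ℕ → Q) (k : ℕ)
    (c : Q) : ℕ → Q :=
  fun i => if i ≤ k then π i else (extChain G f (histUpTo π k, c) (i - (k + 1))).2

lemma extChain_succ (G : GameGraph Q) (f : List Q → Q) (s : List Q × Q) (n : ℕ) :
    extChain G f s (n + 1) = extStep G f (extChain G f s n) :=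
  Function.iterate_succ_apply' _ _ _

lemma extPlay_le (G : GameGraph Q) (f : List Q → Q) (π : ℕ → Q) (k : ℕ) (c : Q)
    {i : ℕ} (hi : i ≤ k) : extPlay G f π k c i = π i := if_pos hi

lemma extPlay_ge (G : GameGraph Q) (f : List Q → Q) (π : ℕ → Q) (k : ℕ) (c : Q)
    (n : ℕ) : extPlay G f π k c (k + 1 + n) = (extChain G f (histUpTo π k, c) n).2 := by
  unfold extPlay
  rw [if_neg (by omega)]
  congr 2
  omega

lemma extPlay_hist (G : GameGraph Q) (f : List Q → Q) (π : ℕ → Q) (k : ℕ) (c : Q) :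
    ∀ n, (extChain G f (histUpTo π k, c) n).1 ++ [(extChain G f (histUpTo π k, c) n).2]
      = histUpTo (extPlay G f π k c) (k + 1 + n) := by
  intro n
  induction n with
  | zero =>
      show (histUpTo π k, c).1 ++ [(histUpTo π k, c).2] = _
      have h1 : histUpTo (extPlay G f π k c) (k + 1) =
          histUpTo (extPlay G f π k c) k ++ [extPlay G f π k c (k + 1)] :=
        histUpTo_succ _ k
      have h2 : histUpTo (extPlay G f π k c) k = histUpTo π k :=
        histUpTo_congr (fun i hi => extPlay_le G f π k c hi)
      have h3 : extPlay G f π k c (k + 1) = c := extPlay_ge G f π k c 0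
      rw [h1, h2, h3]
  | succ n ih =>
      have harith : k + 1 + (n + 1) = (k + 1 + n) + 1 := by omega
      have h1 : histUpTo (extPlay G f π k c) (k + 1 + (n + 1)) =
          histUpTo (extPlay G f π k c) (k + 1 + n) ++
            [extPlay G f π k c ((k + 1 + n) + 1)] := by
        rw [harith]; exact histUpTo_succ _ _
      have h3 : extPlay G f π k c ((k + 1 + n) + 1) =
          (extChain G f (histUpTo π k, c) (n + 1)).2 := by
        rw [← harith]; exact extPlay_ge G f π k c (n + 1)
      rw [h1, h3, ← ih, extChain_succ]
      rfl

lemma exists_extend (G : GameGraph Q) (q : Q) (f : List Q → Q)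
    (hf : IsSysStrategy G f) {π : ℕ → Q} (hπ : π ∈ Lstrat G q f) (k : ℕ) {c : Q}
    (hc : c ∈ G.delta (π k)) (hsys : π k ∈ G.sys → c = f (histUpTo π k)) :
    ∃ π' ∈ Lstrat G q f, (∀ i ≤ k, π' i = π i) ∧ π' (k + 1) = c := by
  set π' := extPlay G f π k c with hπ'
  have hagree : ∀ i ≤ k, π' i = π i := fun i hi => extPlay_le G f π k c hi
  have hkc : π' (k + 1) = c := extPlay_ge G f π k c 0
  refine ⟨π', ⟨⟨?_, ?_⟩, ?_⟩, hagree, hkc⟩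
  · rw [hagree 0 (Nat.zero_le k)]; exact hπ.1.1
  · intro i
    rcases lt_trichotomy i k with hik | rfl | hik
    · rw [hagree i (le_of_lt hik), hagree (i + 1) hik]
      exact hπ.1.2 i
    · rw [hagree i le_rfl, hkc]
      exact hc
    · obtain ⟨n, rfl⟩ : ∃ n, i = k + 1 + n := ⟨i - (k + 1), by omega⟩
      have h1 : π' (k + 1 + n) = (extChain G f (histUpTo π k, c) n).2 :=
        extPlay_ge G f π k c n
      have h2 : π' (k + 1 + n + 1) = (extChain G f (histUpTo π k, c) (n + 1)).2 :=
        extPlay_ge G f π k c (n + 1)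
      rw [h1, h2, extChain_succ]
      by_cases hmem : (extChain G f (histUpTo π k, c) n).2 ∈ G.sys
      · show (extStep G f _).2 ∈ _
        simp only [extStep, if_pos hmem]
        exact hf _ _ hmem
      · show (extStep G f _).2 ∈ _
        simp only [extStep, if_neg hmem]
        exact ((G.delta_nonempty _).some_mem)
  · intro i hisys
    rcases lt_trichotomy i k with hik | rfl | hik
    · rw [hagree (i + 1) hik, histUpTo_congr (fun j hj => hagree j (hj.trans (le_of_lt hik)))]
      exact hπ.2 i (by rwa [hagree i (le_of_lt hik)] at hisys)
    · rw [hkc, histUpTo_congr (fun j hj => hagree j hj)]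
      exact hsys (by rwa [hagree i le_rfl] at hisys)
    · obtain ⟨n, rfl⟩ : ∃ n, i = k + 1 + n := ⟨i - (k + 1), by omega⟩
      have h1 : π' (k + 1 + n) = (extChain G f (histUpTo π k, c) n).2 :=
        extPlay_ge G f π k c n
      have h2 : π' (k + 1 + n + 1) = (extChain G f (histUpTo π k, c) (n + 1)).2 :=
        extPlay_ge G f π k c (n + 1)
      rw [h2, extChain_succ]
      show (extStep G f _).2 = _
      simp only [extStep, if_pos (show (extChain G f (histUpTo π k, c) n).2 ∈ G.sys by
        rwa [h1] at hisys)]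
      rw [extPlay_hist G f π k c n]
end Extend
section MainDefs

variable {Q : Type*}

/-- The set of states reachable by plays compliant with `f`. -/
def Sreach (G : GameGraph Q) (q : Q) (f : List Q → Q) : Set Q :=
  {p | ∃ π ∈ Lstrat G q f, ∃ k, π k = p}

/-- The value of the inner `μY` fixed point with `Z` instantiated to the
reachable region. -/
def Yinf (G : GameGraph Q) (FA FG : Set Q) (q : Q) (f : List Q → Q) : Set Q :=
  innerY G FA FG (Sreach G q f)

/-- `BT π₀ k₀ π k` : the node `(π,k)` lies in the subtree of the compliant play
tree rooted at `(π₀,k₀)` all of whose nodes avoid `Yinf`. -/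
def BT (G : GameGraph Q) (FA FG : Set Q) (q : Q) (f : List Q → Q) (π₀ : ℕ → Q)
    (k₀ : ℕ) (π : ℕ → Q) (k : ℕ) : Prop :=
  π ∈ Lstrat G q f ∧ k₀ ≤ k ∧ (∀ i ≤ k₀, π i = π₀ i) ∧
    ∀ i, k₀ ≤ i → i ≤ k → π i ∉ Yinf G FA FG q f

variable (G : GameGraph Q) (FA FG : Set Q) (q : Q) (f : List Q → Q)

lemma env_or_sys (p : Q) : p ∈ G.env ∨ p ∈ G.sys := by
  have : p ∈ G.env ∪ G.sys := by rw [G.union_env_sys]; trivial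
  exact this

lemma mem_Sreach {π : ℕ → Q} (hπ : π ∈ Lstrat G q f) (k : ℕ) :
    π k ∈ Sreach G q f := ⟨π, hπ, k, rfl⟩

lemma Sreach_subset_Pre1 (hf : IsSysStrategy G f) :
    Sreach G q f ⊆ G.Pre1 (Sreach G q f) := by
  rintro p ⟨π, hπ, k, rfl⟩
  rcases env_or_sys G (π k) with henv | hsys
  · left
    refine ⟨henv, fun c hc => ?_⟩
    obtain ⟨π', hπ', _, hkc⟩ := exists_extend G q f hf hπ k hc
      (fun hs => absurd hs (Set.disjoint_left.mp G.disjoint_env_sys henv))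
    exact hkc ▸ mem_Sreach G q f hπ' (k + 1)
  · exact Or.inr ⟨hsys, π (k + 1), hπ.1.2 k, mem_Sreach G q f hπ (k + 1)⟩

lemma base_subset_Yinf (hf : IsSysStrategy G f) :
    (FG ∩ G.Pre1 (Sreach G q f)) ∪ G.Pre1 (Yinf G FA FG q f) ⊆ Yinf G FA FG q f := by
  set S := Sreach G q f with hS
  set Y := Yinf G FA FG q f with hY
  have hYmono : Monotone (fun Y' => innerX G FA FG S Y') :=
    fun _ _ h => innerX_mono_Y G h
  have hYfix : innerX G FA FG S Y = Y := lfpSet_fixed hYmono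
  set X₀ := (FG ∩ G.Pre1 S) ∪ G.Pre1 Y with hX₀
  have h1 : X₀ ⊆ innerW G FA FG S Y X₀ := by
    intro x hx
    apply Set.mem_sInter.2
    intro W hW
    apply hW
    rcases hx with hx | hx
    · exact Or.inl (Or.inl hx)
    · exact Or.inl (Or.inr hx)
  have h2 : X₀ ⊆ innerX G FA FG S Y := le_gfpSet h1
  exact h2.trans (le_of_eq hYfix)

lemma FG_mem_Yinf (hf : IsSysStrategy G f) {π : ℕ → Q} (hπ : π ∈ Lstrat G q f)
    (k : ℕ) (hFG : π k ∈ FG) : π k ∈ Yinf G FA FG q f :=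
  base_subset_Yinf G FA FG q f hf
    (Or.inl ⟨hFG, Sreach_subset_Pre1 G q f hf (mem_Sreach G q f hπ k)⟩)

lemma succ_not_Yinf (hf : IsSysStrategy G f) {π : ℕ → Q} (hπ : π ∈ Lstrat G q f)
    {k : ℕ} (hk : π k ∉ Yinf G FA FG q f) :
    ∃ π' ∈ Lstrat G q f, (∀ i ≤ k, π' i = π i) ∧ π' (k + 1) ∉ Yinf G FA FG q f := by
  rcases env_or_sys G (π k) with henv | hsys
  · by_cases hall : ∀ c ∈ G.delta (π k), c ∈ Yinf G FA FG q f
    · exact absurd (base_subset_Yinf G FA FG q f hf (Or.inr (Or.inl ⟨henv, hall⟩))) hk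
    · push_neg at hall
      obtain ⟨c, hc, hcY⟩ := hall
      obtain ⟨π', hπ', hag, hkc⟩ := exists_extend G q f hf hπ k hc
        (fun hs => absurd hs (Set.disjoint_left.mp G.disjoint_env_sys henv))
      exact ⟨π', hπ', hag, hkc ▸ hcY⟩
  · refine ⟨π, hπ, fun i _ => rfl, fun hmem => ?_⟩
    exact hk (base_subset_Yinf G FA FG q f hf
      (Or.inr (Or.inr ⟨hsys, π (k + 1), hπ.1.2 k, hmem⟩)))

lemma reach_FG
    (hsub : Lstrat G q f ⊆ (LBuchi G q FA)ᶜ ∪ LBuchi G q FG)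
    (hpre : prefixes (Lstrat G q f) = prefixes (Lstrat G q f ∩ LBuchi G q FA))
    {π : ℕ → Q} (hπ : π ∈ Lstrat G q f) (k : ℕ) :
    ∃ σ ∈ Lstrat G q f, (∀ i ≤ k, σ i = π i) ∧ ∃ j, k + 1 ≤ j ∧ σ j ∈ FG := by
  have hmem : histUpTo π k ∈ prefixes (Lstrat G q f) := ⟨π, hπ, k + 1, rfl⟩
  rw [hpre] at hmem
  obtain ⟨σ, ⟨hσL, hσA⟩, k', heq⟩ := hmem
  have hk' : k' = k + 1 := by
    have := congrArg List.length heq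
    simpa [histUpTo] using this.symm
  subst hk'
  have hag : ∀ i ≤ k, σ i = π i := by
    intro i hi
    exact (map_range_injective heq (i := i) (by omega)).symm
  rcases hsub hσL with hL | hR
  · exact absurd hσA hL
  · obtain ⟨j, hj, hFG⟩ := hR.2 (k + 1)
    exact ⟨σ, hσL, hag, j, hj, hFG⟩

end MainDefs
section StepC

variable {Q : Type*}

lemma stepC (G : GameGraph Q) (FA FG : Set Q) (q : Q) (f : List Q → Q)
    (hf : IsSysStrategy G f)
    (hsub : Lstrat G q f ⊆ (LBuchi G q FA)ᶜ ∪ LBuchi G q FG)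
    (hpre : prefixes (Lstrat G q f) = prefixes (Lstrat G q f ∩ LBuchi G q FA))
    {π₀ : ℕ → Q} {k₀ : ℕ} (hπ₀ : π₀ ∈ Lstrat G q f)
    (hb : π₀ k₀ ∉ Yinf G FA FG q f)
    (hNB : ∀ π k, BT G FA FG q f π₀ k₀ π k → π k ∉ FA) : False := by
  classical
  set S := Sreach G q f with hS
  set Y := Yinf G FA FG q f with hYd
  set C : Set Q := {p | ∃ π k, BT G FA FG q f π₀ k₀ π k ∧ π k = p} with hC
  set X : Set Q := Y ∪ C with hX
  set W : Set Q := innerW G FA FG S Y X with hW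
  have hYmono : Monotone (fun Y' => innerX G FA FG S Y') :=
    fun _ _ h => innerX_mono_Y G h
  have hXmono : Monotone (fun X' => innerW G FA FG S Y X') :=
    fun _ _ h => innerW_mono_X G h
  have hYfix : innerX G FA FG S Y = Y := lfpSet_fixed hYmono
  have hYW : Y ⊆ W := by
    have h1 : Y ⊆ innerW G FA FG S Y Y :=
      calc Y = innerX G FA FG S Y := hYfix.symm
        _ ⊆ innerW G FA FG S Y (innerX G FA FG S Y) := le_map_gfpSet hXmono
        _ = innerW G FA FG S Y Y := by rw [hYfix]
    exact h1.trans (innerW_mono_X G Set.subset_union_left)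
  have hbodyW : body G FA FG S Y X W ⊆ W :=
    map_lfpSet_le (fun _ _ h => body_mono_W G h)
  -- the common closure step
  have key : ∀ (π : ℕ → Q) (k : ℕ), BT G FA FG q f π₀ k₀ π k →
      ∀ e ∈ G.delta (π k), e ∈ W → π k ∈ W := by
    intro π k hBT e hed heW
    apply hbodyW
    refine Or.inr ⟨hNB π k hBT, ⟨e, hed, heW⟩, ?_⟩
    rcases env_or_sys G (π k) with henv | hsys
    · left
      refine ⟨henv, fun c hc => ?_⟩
      obtain ⟨π'', hπ'', hag'', hkc''⟩ := exists_extend G q f hf hBT.1 k hc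
        (fun hs => absurd hs (Set.disjoint_left.mp G.disjoint_env_sys henv))
      by_cases hcY : c ∈ Y
      · exact Or.inl (hYW hcY)
      · have hBT'' : BT G FA FG q f π₀ k₀ π'' (k + 1) := by
          refine ⟨hπ'', hBT.2.1.trans (Nat.le_succ k), ?_, ?_⟩
          · intro i hi
            rw [hag'' i (hi.trans hBT.2.1)]
            exact hBT.2.2.1 i hi
          · intro i h1 h2
            rcases Nat.lt_or_ge i (k + 1) with h3 | h3
            · rw [hag'' i (by omega)]
              exact hBT.2.2.2 i h1 (by omega)
            · have h4 : i = k + 1 := by omega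
              rw [h4, hkc'']
              exact hcY
        refine Or.inr ⟨Or.inr ⟨π'', k + 1, hBT'', hkc''⟩, ?_⟩
        have h5 := hNB π'' (k + 1) hBT''
        rwa [hkc''] at h5
    · exact Or.inr ⟨hsys, e, hed, Or.inl heW⟩
  -- the rank induction
  have Crank : ∀ t (π : ℕ → Q) (k : ℕ), BT G FA FG q f π₀ k₀ π k →
      (∃ π', π' ∈ Lstrat G q f ∧ (∀ i ≤ k, π' i = π i) ∧ π' (k + t + 1) ∈ Y ∧
        ∀ i, k < i → i < k + t + 1 → π' i ∉ Y) → π k ∈ W := by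
    intro t
    induction t with
    | zero =>
        rintro π k hBT ⟨π', hπ', hag, hexit, -⟩
        have hed : π' (k + 1) ∈ G.delta (π k) := by
          have h := hπ'.1.2 k
          rwa [hag k le_rfl] at h
        exact key π k hBT _ hed (hYW hexit)
    | succ s ih =>
        rintro π k hBT ⟨π', hπ', hag, hexit, hmid⟩
        have hed : π' (k + 1) ∈ G.delta (π k) := by
          have h := hπ'.1.2 k
          rwa [hag k le_rfl] at h
        by_cases heY : π' (k + 1) ∈ Y
        · exact key π k hBT _ hed (hYW heY)
        · have hBT' : BT G FA FG q f π₀ k₀ π' (k + 1) := by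
            refine ⟨hπ', hBT.2.1.trans (Nat.le_succ k), ?_, ?_⟩
            · intro i hi
              rw [hag i (hi.trans hBT.2.1)]
              exact hBT.2.2.1 i hi
            · intro i h1 h2
              rcases Nat.lt_or_ge i (k + 1) with h3 | h3
              · rw [hag i (by omega)]
                exact hBT.2.2.2 i h1 (by omega)
              · have h4 : i = k + 1 := by omega
                rw [h4]
                exact heY
          have hW' : π' (k + 1) ∈ W := by
            apply ih π' (k + 1) hBT'
            refine ⟨π', hπ', fun i _ => rfl, ?_, ?_⟩
            · have harith : k + 1 + s + 1 = k + (s + 1) + 1 := by omega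
              rw [harith]
              exact hexit
            · intro i h1 h2
              exact hmid i (by omega) (by omega)
          exact key π k hBT _ hed hW'
  -- C is contained in W
  have hCW : C ⊆ W := by
    rintro p ⟨π, k, hBT, rfl⟩
    obtain ⟨σ, hσ, hagσ, j, hj, hFGj⟩ := reach_FG G FA FG q f hsub hpre hBT.1 k
    have hjY : σ j ∈ Y := FG_mem_Yinf G FA FG q f hf hσ j hFGj
    have hTne : ∃ t, σ (k + t + 1) ∈ Y := ⟨j - k - 1, by
      have h : k + (j - k - 1) + 1 = j := by omega
      rw [h]; exact hjY⟩
    apply Crank (Nat.find hTne) π k hBT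
    refine ⟨σ, hσ, hagσ, Nat.find_spec hTne, ?_⟩
    intro i h1 h2
    have h3 : i - k - 1 < Nat.find hTne := by omega
    have h5 := Nat.find_min hTne h3
    have h4 : k + (i - k - 1) + 1 = i := by omega
    rwa [h4] at h5
  -- conclude
  have hXW : X ⊆ innerW G FA FG S Y X := Set.union_subset hYW hCW
  have hXY : X ⊆ Y := by
    have h1 : X ⊆ innerX G FA FG S Y := le_gfpSet hXW
    rwa [hYfix] at h1
  apply hb
  apply hXY
  exact Or.inr ⟨π₀, k₀, ⟨hπ₀, le_rfl, fun i _ => rfl, fun i h1 h2 => by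
    have h : i = k₀ := by omega
    rwa [h]⟩, rfl⟩

end StepC
section StepB

variable {Q : Type*}

lemma iterate_chain {α : Type*} {P : α → Prop} {R : α → α → Prop} (x₀ : α)
    (h₀ : P x₀) (hstep : ∀ x, P x → ∃ y, P y ∧ R x y) :
    ∃ g : ℕ → α, g 0 = x₀ ∧ (∀ n, P (g n)) ∧ ∀ n, R (g n) (g (n + 1)) := by
  have key : ∀ x : {a // P a}, ∃ y : {a // P a}, R x.1 y.1 := by
    rintro ⟨x, hx⟩
    obtain ⟨y, hy, hr⟩ := hstep x hx
    exact ⟨⟨y, hy⟩, hr⟩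
  choose st hst using key
  refine ⟨fun n => (st^[n] ⟨x₀, h₀⟩).1, rfl, fun n => (st^[n] ⟨x₀, h₀⟩).2, fun n => ?_⟩
  have hit : st^[n + 1] ⟨x₀, h₀⟩ = st (st^[n] ⟨x₀, h₀⟩) :=
    Function.iterate_succ_apply' _ _ _
  show R (st^[n] ⟨x₀, h₀⟩).1 (st^[n + 1] ⟨x₀, h₀⟩).1
  rw [hit]
  exact hst _

lemma stepB (G : GameGraph Q) (FA FG : Set Q) (q : Q) (f : List Q → Q)
    (hf : IsSysStrategy G f)
    (hsub : Lstrat G q f ⊆ (LBuchi G q FA)ᶜ ∪ LBuchi G q FG)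
    {π₀ : ℕ → Q} {k₀ : ℕ} (hπ₀ : π₀ ∈ Lstrat G q f)
    (hb : π₀ k₀ ∉ Yinf G FA FG q f)
    (hall : ∀ π k, π ∈ Lstrat G q f → π k ∉ Yinf G FA FG q f →
      ∃ π' k', BT G FA FG q f π k π' k' ∧ π' k' ∈ FA) : False := by
  classical
  set Y := Yinf G FA FG q f with hYd
  set P : (ℕ → Q) × ℕ → Prop := fun x =>
    x.1 ∈ Lstrat G q f ∧ k₀ ≤ x.2 ∧ ∀ i, k₀ ≤ i → i ≤ x.2 → x.1 i ∉ Y with hP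
  set R : (ℕ → Q) × ℕ → (ℕ → Q) × ℕ → Prop := fun x y =>
    x.2 < y.2 ∧ (∀ i ≤ x.2, y.1 i = x.1 i) ∧ ∃ j, x.2 ≤ j ∧ j ≤ y.2 ∧ y.1 j ∈ FA
    with hR
  have h₀ : P (π₀, k₀) := ⟨hπ₀, le_rfl, fun i h1 h2 => by
    have h : i = k₀ := by omega
    rwa [h]⟩
  have hstep : ∀ x, P x → ∃ y, P y ∧ R x y := by
    rintro ⟨π, t⟩ ⟨hπ, hk₀t, hint⟩
    simp only at hπ hk₀t hint
    have hbt : π t ∉ Y := hint t hk₀t le_rfl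
    obtain ⟨π', k', hBT', hFA'⟩ := hall π t hπ hbt
    obtain ⟨hπ', htk', hag', hint'⟩ := hBT'
    have hk'Y : π' k' ∉ Y := hint' k' htk' le_rfl
    obtain ⟨π'', hπ'', hag'', hk''Y⟩ := succ_not_Yinf G FA FG q f hf hπ' hk'Y
    refine ⟨(π'', k' + 1), ?_, ?_⟩
    · show π'' ∈ Lstrat G q f ∧ k₀ ≤ k' + 1 ∧ ∀ i, k₀ ≤ i → i ≤ k' + 1 → π'' i ∉ Y
      refine ⟨hπ'', by omega, ?_⟩
      intro i h1 h2
      rcases Nat.lt_or_ge i (k' + 1) with h3 | h3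
      · rw [hag'' i (by omega)]
        rcases Nat.le_total i t with h5 | h5
        · rw [hag' i h5]
          exact hint i h1 h5
        · exact hint' i h5 (by omega)
      · have h4 : i = k' + 1 := by omega
        rw [h4]
        exact hk''Y
    · show t < k' + 1 ∧ (∀ i ≤ t, π'' i = π i) ∧ ∃ j, t ≤ j ∧ j ≤ k' + 1 ∧ π'' j ∈ FA
      refine ⟨by omega, ?_, ?_⟩
      · intro i hi
        rw [hag'' i (by omega), hag' i hi]
      · refine ⟨k', htk', by omega, ?_⟩
        rw [hag'' k' le_rfl]
        exact hFA'
  obtain ⟨g, hg0, hgP, hgR⟩ := iterate_chain (π₀, k₀) h₀ hstep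
  set t : ℕ → ℕ := fun n => (g n).2 with ht
  have htmono : StrictMono t := strictMono_nat_of_lt_succ (fun n => (hgR n).1)
  have htle : ∀ n, n ≤ t n := fun n => htmono.le_apply
  have hagree : ∀ n m, n ≤ m → ∀ i ≤ t n, (g m).1 i = (g n).1 i := by
    intro n m hnm
    induction m, hnm using Nat.le_induction with
    | base => intro i _; rfl
    | succ m hnm ih =>
        intro i hi
        rw [(hgR m).2.1 i (hi.trans (htmono.monotone hnm)), ih i hi]
  set τ : ℕ → Q := fun i => (g i).1 i with hτ
  have hτeq : ∀ n i, i ≤ t n → τ i = (g n).1 i := by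
    intro n i hi
    rcases Nat.le_total i n with h | h
    · exact (hagree i n h i (htle i)).symm
    · exact hagree n i h i hi
  have hτL : τ ∈ Lstrat G q f := by
    refine ⟨⟨?_, ?_⟩, ?_⟩
    · have h1 : τ 0 = (g 0).1 0 := hτeq 0 0 (by omega)
      rw [h1, hg0]
      exact hπ₀.1.1
    · intro i
      have e1 : τ i = (g (i + 1)).1 i := hτeq (i + 1) i (by
        have := htle (i + 1); omega)
      have e2 : τ (i + 1) = (g (i + 1)).1 (i + 1) := hτeq (i + 1) (i + 1) (htle (i + 1))
      rw [e1, e2]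
      exact (hgP (i + 1)).1.1.2 i
    · intro i hisys
      have e1 : τ i = (g (i + 1)).1 i := hτeq (i + 1) i (by
        have := htle (i + 1); omega)
      have e2 : τ (i + 1) = (g (i + 1)).1 (i + 1) := hτeq (i + 1) (i + 1) (htle (i + 1))
      have e3 : histUpTo τ i = histUpTo (g (i + 1)).1 i :=
        histUpTo_congr (fun j hj => hτeq (i + 1) j (by
          have := htle (i + 1); omega))
      rw [e1] at hisys
      rw [e2, e3]
      exact (hgP (i + 1)).1.2 i hisys
  have hτY : ∀ i, k₀ ≤ i → τ i ∉ Y := by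
    intro i hi
    have e1 : τ i = (g i).1 i := hτeq i i (htle i)
    rw [e1]
    exact (hgP i).2.2 i hi (htle i)
  have hτFA : InfOft τ FA := by
    intro n
    obtain ⟨j, hj1, hj2, hjFA⟩ := (hgR n).2.2
    refine ⟨j, (htle n).trans hj1, ?_⟩
    rw [hτeq (n + 1) j hj2]
    exact hjFA
  rcases hsub hτL with hL | hRR
  · exact hL ⟨hτL.1, hτFA⟩
  · obtain ⟨j, hj, hFGj⟩ := hRR.2 k₀
    exact hτY j hj (FG_mem_Yinf G FA FG q f hf hτL j hFGj)

end StepB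
/-- The heart of Statement 12: a non-conflicting winning strategy forces
membership in `⟦φ₄⟧`. -/
lemma winning_nonconflicting_mem_phi4 {Q : Type*} (G : GameGraph Q) (FA FG : Set Q)
    (q : Q) (f : List Q → Q) (hf : IsSysStrategy G f)
    (hne : (Lstrat G q f).Nonempty)
    (hsub : Lstrat G q f ⊆ (LBuchi G q FA)ᶜ ∪ LBuchi G q FG)
    (hpre : prefixes (Lstrat G q f) = prefixes (Lstrat G q f ∩ LBuchi G q FA)) :
    q ∈ phi4 G FA FG := by
  classical
  have MC : ∀ π ∈ Lstrat G q f, ∀ k, π k ∈ Yinf G FA FG q f := by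
    by_contra hMC
    push_neg at hMC
    obtain ⟨π₀, hπ₀, k₀, hbad⟩ := hMC
    by_cases hBR : ∃ π k, (π ∈ Lstrat G q f ∧ π k ∉ Yinf G FA FG q f) ∧
        ∀ π' k', BT G FA FG q f π k π' k' → π' k' ∉ FA
    · obtain ⟨π₁, k₁, ⟨hπ₁, hb₁⟩, hNB⟩ := hBR
      exact stepC G FA FG q f hf hsub hpre hπ₁ hb₁ hNB
    · push_neg at hBR
      apply stepB G FA FG q f hf hsub hπ₀ hbad
      intro π k hπ hk
      exact hBR π k ⟨hπ, hk⟩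
  have hSY : Sreach G q f ⊆ innerY G FA FG (Sreach G q f) := by
    rintro p ⟨π, hπ, k, rfl⟩
    exact MC π hπ k
  obtain ⟨π, hπ⟩ := hne
  exact le_gfpSet hSY ⟨π, hπ, 0, hπ.1.1⟩
/-- Lemma 8 of the paper: if `q ∉ ⟦φ₄⟧` and the system strategy
`f¹` satisfies `∅ ≠ L_q(H,f¹) ⊆ L̄_q(H,F_A) ∪ L_q(H,F_G)`, then
`Pre(L_q(H,f¹)) ≠ Pre(L_q(H,f¹) ∩ L_q(H,F_A))`, i.e. `f¹` is conflicting from `q`. -/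
theorem losing_state_conflicting {Q : Type*} [Fintype Q] (G : GameGraph Q)
    (FA FG : Set Q) (q : Q) (hq : q ∉ phi4 G FA FG)
    (f : List Q → Q) (hf : IsSysStrategy G f)
    (hwin : (Lstrat G q f).Nonempty ∧
      Lstrat G q f ⊆ (LBuchi G q FA)ᶜ ∪ LBuchi G q FG) :
    prefixes (Lstrat G q f) ≠ prefixes (Lstrat G q f ∩ LBuchi G q FA) := by
  intro hpre
  exact hq (winning_nonconflicting_mem_phi4 G FA FG q f hf hwin.1 hwin.2 hpre)

end GR1
end
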